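/- Let ψ solve the discrete Poisson (dipole) equation B ψ = q where q has a nonnegative entry only at node r, a nonpositive entry only at node s, and zeros elsewhere. Define u_d as the maximum of ψ_n over nodes n at graph distance d from r. Then u_d ≤ u_{d-1} for all 1 ≤ d ≤ d_max, i.e., the maximum potential change decreases monotonically with distance from r. -/

import Mathlib

open Matrix BigOperators

/-- The weighted Laplacian of a weight function `w` on `Fin N`. -/
def lapMat {N : ℕ} (w : Fin N → Fin N → ℝ) : Matrix (Fin N) (Fin N) ℝ :=
  fun i j => if i = j then ∑ k, w i k else - w i j

/-- Symmetric, nonnegative weights with zero diagonal. -/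
def IsWeight {N : ℕ} (w : Fin N → Fin N → ℝ) : Prop :=
  (∀ i j, w i j = w j i) ∧ (∀ i j, 0 ≤ w i j) ∧ (∀ i, w i i = 0)

/-- The simple graph whose edges are the pairs with nonzero weight. -/
def wGraph {N : ℕ} (w : Fin N → Fin N → ℝ) : SimpleGraph (Fin N) where
  Adj i j := i ≠ j ∧ (w i j ≠ 0 ∨ w j i ≠ 0)
  symm := ⟨fun i j ⟨h1, h2⟩ => ⟨h1.symm, h2.symm⟩⟩
  loopless := ⟨fun i h => h.1 rfl⟩

/-- The dipole vector `ν_rs`: `+1` at `r`, `-1` at `s`, `0` elsewhere. -/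
def dipole {N : ℕ} (r s : Fin N) : Fin N → ℝ :=
  fun i => (if i = r then (1:ℝ) else 0) - (if i = s then (1:ℝ) else 0)

/-- `Bd` is the Moore-Penrose pseudoinverse of `B` (the four Penrose axioms). -/
def IsMoorePenrose {N : ℕ} (B Bd : Matrix (Fin N) (Fin N) ℝ) : Prop :=
  B * Bd * B = B ∧ Bd * B * Bd = Bd ∧ (B * Bd)ᵀ = B * Bd ∧ (Bd * B)ᵀ = Bd * B

/-- The locality factor `η(r,s) = b_rs ν_rs^T B^† ν_rs`. -/
def eta {N : ℕ} (w : Fin N → Fin N → ℝ) (Bdag : Matrix (Fin N) (Fin N) ℝ)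
    (r s : Fin N) : ℝ :=
  w r s * (dipole r s ⬝ᵥ Bdag.mulVec (dipole r s))

/-!
Away from `r` the source is nonpositive, so there `ψ` is at most the weighted mean of its
neighbours and cannot have a strict local maximum. Take, among the maximisers of `ψ` over the
nodes at distance `≥ d` from `r`, one closest to `r`: a neighbour one step closer is again a
maximiser, so it must lie at distance `d - 1`, and `u (d - 1)` dominates everything beyond.
-/

open SimpleGraph

section Graph

variable {V : Type*} {G : SimpleGraph V}

lemma SimpleGraph.Connected.dist_le_dist_add_one_of_adj (hG : G.Connected) (r : V) {t k : V}
    (h : G.Adj t k) : G.dist r t ≤ G.dist r k + 1 := by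
  have := (hG r k).dist_triangle_left t
  rwa [dist_eq_one_iff_adj.mpr h.symm] at this

lemma SimpleGraph.Connected.exists_adj_dist_add_one_eq (hG : G.Connected) {r t : V}
    (ht : G.dist r t ≠ 0) : ∃ m, G.Adj t m ∧ G.dist r m + 1 = G.dist r t := by
  obtain ⟨p, hp⟩ := (hG t r).exists_walk_length_eq_dist
  rw [dist_comm] at hp
  have hp_not_nil : ¬ p.Nil := by
    rw [← Walk.length_eq_zero_iff, hp]; exact ht
  refine ⟨p.snd, p.adj_snd hp_not_nil, le_antisymm ?_ ?_⟩
  · calc G.dist r p.snd + 1 = G.dist p.snd r + 1 := by rw [dist_comm]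
      _ ≤ p.tail.length + 1 := by gcongr; exact dist_le _
      _ = G.dist r t := by rw [Walk.length_tail_add_one hp_not_nil, hp]
  · exact hG.dist_le_dist_add_one_of_adj r (p.adj_snd hp_not_nil)

theorem SimpleGraph.Connected.exists_dist_eq_sub_one_le [Finite V] {α : Type*} [LinearOrder α]
    (hG : G.Connected) {r : V} {ψ : V → α}
    (hmax : ∀ t ≠ r, (∀ k, G.Adj t k → ψ k ≤ ψ t) → ∀ k, G.Adj t k → ψ k = ψ t)
    {d : ℕ} (hd : 1 ≤ d) {n : V} (hn : d ≤ G.dist r n) :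
    ∃ m, G.dist r m = d - 1 ∧ ψ n ≤ ψ m := by
  classical
  have := Fintype.ofFinite V
  by_contra! hlt
  set A := Finset.univ.filter fun x => d ≤ G.dist r x
  obtain ⟨b, hbA, hbmax⟩ := A.exists_max_image ψ ⟨n, by simpa [A] using hn⟩
  obtain ⟨t, htB, htmin⟩ := (A.filter fun x => ψ x = ψ b).exists_min_image (G.dist r)
    ⟨b, Finset.mem_filter.mpr ⟨hbA, rfl⟩⟩
  simp only [A, Finset.mem_filter, Finset.mem_univ, true_and] at hbmax htB htmin
  obtain ⟨htd, htb⟩ := htB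
  have hnb : ψ n ≤ ψ b := hbmax n hn
  have hle : ∀ k, G.Adj t k → ψ k ≤ ψ t := by
    intro k hk
    have := hG.dist_le_dist_add_one_of_adj r hk
    rcases le_or_gt d (G.dist r k) with hkd | hkd
    · exact htb ▸ hbmax k hkd
    · exact htb ▸ (hlt k (by omega)).le.trans hnb
  obtain ⟨m, hadj, hm⟩ := hG.exists_adj_dist_add_one_eq (r := r) (t := t) (by omega)
  have hψm : ψ m = ψ t := hmax t (by rintro rfl; simp at htd; omega) hle m hadj
  rcases le_or_gt d (G.dist r m) with hmd | hmd
  · have := htmin m ⟨hmd, hψm.trans htb⟩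
    omega
  · have := hlt m (by omega)
    order

end Graph

lemma eq_of_sum_mul_sub_nonpos {ι : Type*} [Fintype ι] {c ψ : ι → ℝ} {x : ℝ}
    (hc : ∀ k, 0 ≤ c k) (hsum : ∑ k, c k * (x - ψ k) ≤ 0) (hle : ∀ k, c k ≠ 0 → ψ k ≤ x)
    {k : ι} (hk : c k ≠ 0) : ψ k = x := by
  have hterm : ∀ j ∈ Finset.univ, 0 ≤ c j * (x - ψ j) := fun j _ => by
    by_cases hj : c j = 0
    · simp [hj]
    · exact mul_nonneg (hc j) (sub_nonneg.mpr (hle j hj))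
  have hzero := (Finset.sum_eq_zero_iff_of_nonneg hterm).mp
    (le_antisymm hsum (Finset.sum_nonneg hterm)) k (Finset.mem_univ k)
  rcases mul_eq_zero.mp hzero with h | h
  · exact absurd h hk
  · linarith

section Laplacian

variable {N : ℕ} {w : Fin N → Fin N → ℝ}

lemma lapMat_mulVec_apply (ψ : Fin N → ℝ) {n : Fin N} (hn : w n n = 0) :
    (lapMat w *ᵥ ψ) n = ∑ k, w n k * (ψ n - ψ k) := by
  have hsplit : ∀ k, lapMat w n k * ψ k
      = (if n = k then (∑ j, w n j) * ψ n else 0) - w n k * ψ k := by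
    intro k
    by_cases h : n = k
    · subst h; simp [lapMat, hn]
    · simp [lapMat, h]
  simp only [mulVec, dotProduct, hsplit, Finset.sum_sub_distrib, Finset.sum_ite_eq,
    Finset.mem_univ, if_true, mul_sub, Finset.sum_mul]

lemma wGraph_adj_iff (hw : IsWeight w) {i j : Fin N} : (wGraph w).Adj i j ↔ w i j ≠ 0 := by
  obtain ⟨hsym, -, hdiag⟩ := hw
  refine ⟨fun h => h.2.elim id (hsym i j ▸ ·), fun h => ⟨?_, Or.inl h⟩⟩
  rintro rfl
  exact h (hdiag i)

lemma IsWeight.eq_of_wGraph_adj_of_lapMat_mulVec_nonpos (hw : IsWeight w) {ψ : Fin N → ℝ}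
    {t : Fin N} (ht : (lapMat w *ᵥ ψ) t ≤ 0) (hle : ∀ k, (wGraph w).Adj t k → ψ k ≤ ψ t)
    {k : Fin N} (hk : (wGraph w).Adj t k) : ψ k = ψ t :=
  eq_of_sum_mul_sub_nonpos (hw.2.1 t) (lapMat_mulVec_apply ψ (hw.2.2 t) ▸ ht)
    (fun j hj => hle j ((wGraph_adj_iff hw).2 hj)) ((wGraph_adj_iff hw).1 hk)

end Laplacian

lemma finite_setOf_exists_eq {V α : Type*} [Finite V] (ψ : V → α) (P : V → Prop) :
    {x | ∃ n, P n ∧ x = ψ n}.Finite :=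
  (Set.finite_range ψ).subset (by rintro x ⟨n, -, rfl⟩; exact ⟨n, rfl⟩)

section Supremum

variable {V α : Type*} [Finite V] [ConditionallyCompleteLinearOrder α] (ψ : V → α) {P : V → Prop}

lemma le_sSup_setOf_exists_eq {n : V} (hn : P n) : ψ n ≤ sSup {x | ∃ n, P n ∧ x = ψ n} :=
  le_csSup (finite_setOf_exists_eq ψ P).bddAbove ⟨n, hn, rfl⟩

lemma exists_sSup_setOf_exists_eq (h : ∃ n, P n) :
    ∃ n, P n ∧ sSup {x | ∃ n, P n ∧ x = ψ n} = ψ n := by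
  obtain ⟨n, hn⟩ := h
  have hne : {x | ∃ n, P n ∧ x = ψ n}.Nonempty := ⟨ψ n, n, hn, rfl⟩
  exact hne.csSup_mem (finite_setOf_exists_eq ψ P)

end Supremum

theorem potential_max_decays_with_distance_general {N : ℕ} (w : Fin N → Fin N → ℝ)
    (hw : IsWeight w) (hconn : (wGraph w).Connected)
    (r s : Fin N) (q ψ : Fin N → ℝ)
    (hq : (lapMat w).mulVec ψ = q)
    (hqs : q s ≤ 0) (hq0 : ∀ n, n ≠ r → n ≠ s → q n = 0)
    (u : ℕ → ℝ)
    (hu : ∀ d, u d = sSup {x : ℝ | ∃ n, (wGraph w).dist r n = d ∧ x = ψ n}) :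
    ∀ d : ℕ, 1 ≤ d → (∃ n, (wGraph w).dist r n = d) → u d ≤ u (d - 1) := by
  have hq_nonpos : ∀ t ≠ r, q t ≤ 0 := fun t htr => by
    by_cases hts : t = s
    · exact hts ▸ hqs
    · exact (hq0 t htr hts).le
  have hmax : ∀ t ≠ r, (∀ k, (wGraph w).Adj t k → ψ k ≤ ψ t) →
      ∀ k, (wGraph w).Adj t k → ψ k = ψ t := fun t htr hle _ hk =>
    hw.eq_of_wGraph_adj_of_lapMat_mulVec_nonpos (hq ▸ hq_nonpos t htr) hle hk
  intro d hd hlayer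
  obtain ⟨n, hn, hun⟩ := exists_sSup_setOf_exists_eq ψ hlayer
  obtain ⟨m, hm, hnm⟩ := hconn.exists_dist_eq_sub_one_le hmax hd hn.ge
  calc u d = ψ n := by rw [hu, hun]
    _ ≤ ψ m := hnm
    _ ≤ u (d - 1) := hu (d - 1) ▸ le_sSup_setOf_exists_eq ψ hm

theorem potential_max_decays_with_distance {N : ℕ} (w : Fin N → Fin N → ℝ)
    (hw : IsWeight w) (hconn : (wGraph w).Connected)
    (r s : Fin N) (q ψ : Fin N → ℝ)
    (hq : (lapMat w).mulVec ψ = q)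
    (hqr : 0 ≤ q r) (hqs : q s ≤ 0) (hq0 : ∀ n, n ≠ r → n ≠ s → q n = 0)
    (u : ℕ → ℝ)
    (hu : ∀ d, u d = sSup {x : ℝ | ∃ n, (wGraph w).dist r n = d ∧ x = ψ n}) :
    ∀ d : ℕ, 1 ≤ d → (∃ n, (wGraph w).dist r n = d) → u d ≤ u (d - 1) :=
  potential_max_decays_with_distance_general w hw hconn r s q ψ hq hqs hq0 u hu
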